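/- arXiv:2603.25362 — 2 statements merged into one kernel-verified Lean document; each statement's English description precedes it below -/
import Mathlib

section
/- Let a ≥ 1 be an integer such that p := a² + (a+1)² = 2a² + 2a + 1 is prime, and let π = a + (a+1)·i ∈ ℤ[i]. Then: (i) (2a+1)⁴ ≡ 1 (mod p); (ii) every element of ℤ[i]/(π) is the residue class of x + y·i for some integers x, y with |x| + |y| ≤ a; and (iii) for all integers x, y with |x| + |y| ≤ a, the Mannheim weight of the residue class of x + y·i in ℤ[i]/(π) equals |x| + |y|. -/
open scoped Classical

noncomputable section

/-- The quotient ring `ℤ[i]/(π)`. -/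
abbrev GQuot (pi : GaussianInt) : Type := GaussianInt ⧸ Ideal.span {pi}

/-- The quotient map `ℤ[i] → ℤ[i]/(π)`. -/
def gmk (pi : GaussianInt) : GaussianInt →+* GQuot pi := Ideal.Quotient.mk (Ideal.span {pi})

/-- Mannheim weight of an element of `ℤ[i]/(π)`:
the minimum of `|x| + |y|` over representatives `x + y·i`. -/
def mWt (pi : GaussianInt) (α : GQuot pi) : ℕ :=
  sInf { w : ℕ | ∃ z : GaussianInt, gmk pi z = α ∧ z.re.natAbs + z.im.natAbs = w }

/-- Mannheim weight of a vector: the sum of the Mannheim weights of its coordinates. -/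
def mWtVec (pi : GaussianInt) {n : ℕ} (v : Fin n → GQuot pi) : ℕ := ∑ i, mWt pi (v i)

private lemma gmk_eq_iff (pi z w : GaussianInt) :
    gmk pi z = gmk pi w ↔ pi ∣ z - w := by
  rw [gmk, Ideal.Quotient.mk_eq_mk_iff_sub_mem, Ideal.mem_span_singleton]

/-- Core integer inequality: nonzero multiples of `π` have weight at least `2a+1`. -/
private lemma core (a : ℕ) (r s : ℤ) (h : ¬(r = 0 ∧ s = 0)) :
    (2 * a + 1 : ℤ) ≤ |(a : ℤ) * r - ((a : ℤ) + 1) * s| + |(a : ℤ) * s + ((a : ℤ) + 1) * r| := by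
  set A : ℤ := (a : ℤ) * r - ((a : ℤ) + 1) * s with hA
  set B : ℤ := (a : ℤ) * s + ((a : ℤ) + 1) * r with hB
  have ha : (0 : ℤ) ≤ (a : ℤ) := Int.natCast_nonneg a
  have ha1 : (0 : ℤ) ≤ (a : ℤ) + 1 := by linarith
  have hc : (0 : ℤ) ≤ 2 * (a : ℤ) ^ 2 + 2 * (a : ℤ) + 1 := by positivity
  have hnA : (0 : ℤ) ≤ |A| := abs_nonneg A
  have hnB : (0 : ℤ) ≤ |B| := abs_nonneg B
  have eA : |(a : ℤ) * A| = (a : ℤ) * |A| := by rw [abs_mul, abs_of_nonneg ha]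
  have eA1 : |((a : ℤ) + 1) * A| = ((a : ℤ) + 1) * |A| := by rw [abs_mul, abs_of_nonneg ha1]
  have eB : |(a : ℤ) * B| = (a : ℤ) * |B| := by rw [abs_mul, abs_of_nonneg ha]
  have eB1 : |((a : ℤ) + 1) * B| = ((a : ℤ) + 1) * |B| := by rw [abs_mul, abs_of_nonneg ha1]
  rcases (by tauto : r ≠ 0 ∨ s ≠ 0) with hr | hs
  · have key : (a : ℤ) * A + ((a : ℤ) + 1) * B = (2 * (a : ℤ) ^ 2 + 2 * (a : ℤ) + 1) * r := by
      rw [hA, hB]; ring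
    have h1 : (2 * (a : ℤ) ^ 2 + 2 * (a : ℤ) + 1) * |r|
        = |(a : ℤ) * A + ((a : ℤ) + 1) * B| := by
      rw [key, abs_mul, abs_of_nonneg hc]
    have h2 : |(a : ℤ) * A + ((a : ℤ) + 1) * B| ≤ (a : ℤ) * |A| + ((a : ℤ) + 1) * |B| := by
      calc |(a : ℤ) * A + ((a : ℤ) + 1) * B| ≤ |(a : ℤ) * A| + |((a : ℤ) + 1) * B| :=
            abs_add_le _ _
        _ = (a : ℤ) * |A| + ((a : ℤ) + 1) * |B| := by rw [eA, eB1]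
    have hr1 : 1 ≤ |r| := Int.one_le_abs hr
    nlinarith [mul_le_mul_of_nonneg_left hr1 hc]
  · have key : ((a : ℤ) + 1) * A - (a : ℤ) * B
        = -((2 * (a : ℤ) ^ 2 + 2 * (a : ℤ) + 1) * s) := by
      rw [hA, hB]; ring
    have h1 : (2 * (a : ℤ) ^ 2 + 2 * (a : ℤ) + 1) * |s|
        = |((a : ℤ) + 1) * A - (a : ℤ) * B| := by
      rw [key, abs_neg, abs_mul, abs_of_nonneg hc]
    have h2 : |((a : ℤ) + 1) * A - (a : ℤ) * B| ≤ ((a : ℤ) + 1) * |A| + (a : ℤ) * |B| := by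
      calc |((a : ℤ) + 1) * A - (a : ℤ) * B| ≤ |((a : ℤ) + 1) * A| + |(a : ℤ) * B| :=
            abs_sub _ _
        _ = ((a : ℤ) + 1) * |A| + (a : ℤ) * |B| := by rw [eA1, eB]
    have hs1 : 1 ≤ |s| := Int.one_le_abs hs
    nlinarith [mul_le_mul_of_nonneg_left hs1 hc]

/-- A nonzero multiple of `π = a + (a+1)i` has Mannheim weight at least `2a+1`. -/
private lemma dvd_weight (a : ℕ) (d : GaussianInt)
    (hd : (⟨(a : ℤ), (a : ℤ) + 1⟩ : GaussianInt) ∣ d) (hd0 : d ≠ 0) :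
    2 * a + 1 ≤ d.re.natAbs + d.im.natAbs := by
  obtain ⟨u, rfl⟩ := hd
  have hu : ¬(u.re = 0 ∧ u.im = 0) := by
    rintro ⟨h1, h2⟩
    apply hd0
    have : u = 0 := by
      ext <;> simp [h1, h2]
    simp [this]
  have hre : ((⟨(a : ℤ), (a : ℤ) + 1⟩ : GaussianInt) * u).re
      = (a : ℤ) * u.re - ((a : ℤ) + 1) * u.im := by
    rw [Zsqrtd.re_mul]; ring
  have him : ((⟨(a : ℤ), (a : ℤ) + 1⟩ : GaussianInt) * u).im
      = (a : ℤ) * u.im + ((a : ℤ) + 1) * u.re := by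
    rw [Zsqrtd.im_mul]
  have hcore := core a u.re u.im hu
  rw [← hre, ← him] at hcore
  have e1 : |((⟨(a : ℤ), (a : ℤ) + 1⟩ : GaussianInt) * u).re|
      = (((⟨(a : ℤ), (a : ℤ) + 1⟩ : GaussianInt) * u).re.natAbs : ℤ) := (Int.abs_eq_natAbs _)
  have e2 : |((⟨(a : ℤ), (a : ℤ) + 1⟩ : GaussianInt) * u).im|
      = (((⟨(a : ℤ), (a : ℤ) + 1⟩ : GaussianInt) * u).im.natAbs : ℤ) := (Int.abs_eq_natAbs _)
  rw [e1, e2] at hcore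
  exact_mod_cast hcore

/-- Weight reduction step: if `|x| + |y| ≥ a+1`, we can subtract a unit multiple of `π`
and strictly decrease the weight. -/
private lemma reduce (a : ℕ) (x y : ℤ) (hw : a + 1 ≤ x.natAbs + y.natAbs) :
    ∃ x' y' : ℤ, x'.natAbs + y'.natAbs < x.natAbs + y.natAbs ∧
      (⟨(a : ℤ), (a : ℤ) + 1⟩ : GaussianInt) ∣ (⟨x, y⟩ - ⟨x', y'⟩ : GaussianInt) := by
  have hmove : ∃ dx dy : ℤ,
      ((dx = (a : ℤ) ∧ dy = (a : ℤ) + 1) ∨ (dx = -(a : ℤ) ∧ dy = -((a : ℤ) + 1)) ∨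
       (dx = (a : ℤ) + 1 ∧ dy = -(a : ℤ)) ∨ (dx = -((a : ℤ) + 1) ∧ dy = (a : ℤ))) ∧
      (x - dx).natAbs + (y - dy).natAbs < x.natAbs + y.natAbs := by
    by_cases hx : 0 ≤ x
    · by_cases hy : 0 ≤ y
      · by_cases hc : (a : ℤ) + 1 ≤ x ∧ y ≤ (a : ℤ)
        · exact ⟨(a : ℤ) + 1, -(a : ℤ), Or.inr (Or.inr (Or.inl ⟨rfl, rfl⟩)), by omega⟩
        · exact ⟨(a : ℤ), (a : ℤ) + 1, Or.inl ⟨rfl, rfl⟩, by omega⟩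
      · -- x ≥ 0, y < 0
        by_cases hc : y ≤ -((a : ℤ) + 1) ∧ x ≤ (a : ℤ)
        · exact ⟨-(a : ℤ), -((a : ℤ) + 1), Or.inr (Or.inl ⟨rfl, rfl⟩), by omega⟩
        · exact ⟨(a : ℤ) + 1, -(a : ℤ), Or.inr (Or.inr (Or.inl ⟨rfl, rfl⟩)), by omega⟩
    · by_cases hy : 0 ≤ y
      · -- x < 0, y ≥ 0
        by_cases hc : (a : ℤ) + 1 ≤ y ∧ -(a : ℤ) ≤ x
        · exact ⟨(a : ℤ), (a : ℤ) + 1, Or.inl ⟨rfl, rfl⟩, by omega⟩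
        · exact ⟨-((a : ℤ) + 1), (a : ℤ), Or.inr (Or.inr (Or.inr ⟨rfl, rfl⟩)), by omega⟩
      · -- x < 0, y < 0
        by_cases hc : x ≤ -((a : ℤ) + 1) ∧ -(a : ℤ) ≤ y
        · exact ⟨-((a : ℤ) + 1), (a : ℤ), Or.inr (Or.inr (Or.inr ⟨rfl, rfl⟩)), by omega⟩
        · exact ⟨-(a : ℤ), -((a : ℤ) + 1), Or.inr (Or.inl ⟨rfl, rfl⟩), by omega⟩
  obtain ⟨dx, dy, hdisj, hlt⟩ := hmove
  refine ⟨x - dx, y - dy, hlt, ?_⟩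
  have hsub : (⟨x, y⟩ - ⟨x - dx, y - dy⟩ : GaussianInt) = ⟨dx, dy⟩ := by
    ext <;> simp [Zsqrtd.re_sub, Zsqrtd.im_sub]
  rw [hsub]
  rcases hdisj with ⟨h1, h2⟩ | ⟨h1, h2⟩ | ⟨h1, h2⟩ | ⟨h1, h2⟩ <;> subst h1 <;> subst h2
  · exact ⟨1, by ext <;> simp [Zsqrtd.re_mul, Zsqrtd.im_mul]⟩
  · exact ⟨-1, by ext <;> simp [Zsqrtd.re_mul, Zsqrtd.im_mul]⟩
  · exact ⟨⟨0, -1⟩, by ext <;> simp [Zsqrtd.re_mul, Zsqrtd.im_mul]⟩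
  · exact ⟨⟨0, 1⟩, by ext <;> simp [Zsqrtd.re_mul, Zsqrtd.im_mul]⟩

/-- Every class has a representative in the diamond of radius `a`. -/
private lemma toDiamond (a : ℕ) (pi : GaussianInt)
    (hpi : pi = (⟨(a : ℤ), (a : ℤ) + 1⟩ : GaussianInt)) :
    ∀ w : ℕ, ∀ x y : ℤ, x.natAbs + y.natAbs ≤ w →
      ∃ x' y' : ℤ, x'.natAbs + y'.natAbs ≤ a ∧ gmk pi ⟨x', y'⟩ = gmk pi ⟨x, y⟩ := by
  intro w
  induction w with
  | zero => exact fun x y h => ⟨x, y, by omega, rfl⟩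
  | succ n ih =>
    intro x y h
    by_cases hle : x.natAbs + y.natAbs ≤ a
    · exact ⟨x, y, hle, rfl⟩
    · obtain ⟨x', y', hlt, hdvd⟩ := reduce a x y (by omega)
      obtain ⟨x'', y'', h2, h3⟩ := ih x' y' (by omega)
      refine ⟨x'', y'', h2, ?_⟩
      rw [h3, gmk_eq_iff, hpi]
      rw [show ((⟨x', y'⟩ : GaussianInt) - ⟨x, y⟩) = -(⟨x, y⟩ - ⟨x', y'⟩) by ring]
      exact Dvd.dvd.neg_right hdvd

/-- let `a ≥ 1` with `p = 2a² + 2a + 1 = a² + (a+1)²` prime and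
`π = a + (a+1)·i`. Then (i) `(2a+1)⁴ ≡ 1 (mod p)`; (ii) every element of `ℤ[i]/(π)` is the
class of some `x + y·i` with `|x| + |y| ≤ a`; (iii) for `|x| + |y| ≤ a`, the class of
`x + y·i` has Mannheim weight exactly `|x| + |y|`. -/
theorem stmt3 (a : ℕ) (ha : 1 ≤ a) (hp : Nat.Prime (2 * a ^ 2 + 2 * a + 1))
    (pi : GaussianInt) (hpi : pi = (⟨(a : ℤ), (a : ℤ) + 1⟩ : GaussianInt)) :
    ((2 * a + 1) ^ 4 ≡ 1 [MOD 2 * a ^ 2 + 2 * a + 1]) ∧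
    (∀ α : GQuot pi, ∃ x y : ℤ, x.natAbs + y.natAbs ≤ a ∧
        gmk pi (⟨x, y⟩ : GaussianInt) = α) ∧
    (∀ x y : ℤ, x.natAbs + y.natAbs ≤ a →
        mWt pi (gmk pi (⟨x, y⟩ : GaussianInt)) = x.natAbs + y.natAbs) := by
  refine ⟨?_, ?_, ?_⟩
  · -- (i)
    have h : (2 * a + 1) ^ 4 = 1 + (2 * a ^ 2 + 2 * a + 1) * (8 * a ^ 2 + 8 * a) := by ring
    show (2 * a + 1) ^ 4 % _ = 1 % _
    rw [h, Nat.add_mul_mod_self_left]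
  · -- (ii)
    intro α
    obtain ⟨z, hz⟩ := Ideal.Quotient.mk_surjective (I := Ideal.span {pi}) α
    obtain ⟨x', y', h1, h2⟩ :=
      toDiamond a pi hpi (z.re.natAbs + z.im.natAbs) z.re z.im le_rfl
    refine ⟨x', y', h1, ?_⟩
    rw [h2]
    exact hz
  · -- (iii)
    intro x y hxy
    have hmem : x.natAbs + y.natAbs ∈
        { w : ℕ | ∃ z : GaussianInt, gmk pi z = gmk pi (⟨x, y⟩ : GaussianInt) ∧
            z.re.natAbs + z.im.natAbs = w } := ⟨⟨x, y⟩, rfl, rfl⟩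
    have hlb : ∀ w ∈ { w : ℕ | ∃ z : GaussianInt, gmk pi z = gmk pi (⟨x, y⟩ : GaussianInt) ∧
        z.re.natAbs + z.im.natAbs = w }, x.natAbs + y.natAbs ≤ w := by
      rintro w ⟨z, hz, rfl⟩
      by_contra hcon
      push_neg at hcon
      have hd : pi ∣ z - ⟨x, y⟩ := (gmk_eq_iff pi z ⟨x, y⟩).mp hz
      have hd0 : z - (⟨x, y⟩ : GaussianInt) ≠ 0 := by
        intro h0
        have heq : z = (⟨x, y⟩ : GaussianInt) := sub_eq_zero.mp h0
        have e1 : z.re = x := by rw [heq]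
        have e2 : z.im = y := by rw [heq]
        omega
      rw [hpi] at hd
      have hkey := dvd_weight a _ hd hd0
      have hre : (z - (⟨x, y⟩ : GaussianInt)).re = z.re - x := Zsqrtd.re_sub z _
      have him : (z - (⟨x, y⟩ : GaussianInt)).im = z.im - y := Zsqrtd.im_sub z _
      have t1 : (z.re - x).natAbs ≤ z.re.natAbs + x.natAbs := Int.natAbs_sub_le _ _
      have t2 : (z.im - y).natAbs ≤ z.im.natAbs + y.natAbs := Int.natAbs_sub_le _ _
      rw [hre, him] at hkey
      omega
    have hne : { w : ℕ | ∃ z : GaussianInt, gmk pi z = gmk pi (⟨x, y⟩ : GaussianInt) ∧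
        z.re.natAbs + z.im.natAbs = w }.Nonempty := ⟨_, hmem⟩
    exact le_antisymm (Nat.sInf_le hmem) (hlb _ (Nat.sInf_mem hne))
end
end

section
/- Let π = a + b·i ∈ ℤ[i] with 0 < a < b, gcd(a,b) = 1, and p = a² + b² a prime with p ≡ 1 (mod 4), and let 𝔽 = ℤ[i]/(π). Then: (i) for every v ∈ 𝔽^n, Σ_{λ∈𝔽∖{0}} wt_π(λ·v) = ( Σ_{x∈𝔽∖{0}} wt_π(x) ) · wt_H(v), where wt_H(v) is the number of nonzero coordinates of v; and (ii) for every linear code C ⊆ 𝔽^n containing a nonzero codeword, (p − 1)·d_π(C) ≤ ( Σ_{x∈𝔽∖{0}} wt_π(x) ) · d_H(C). -/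
open scoped Classical

noncomputable section

/-- Hamming weight of a vector: the number of nonzero coordinates. -/
def hWtVec {n : ℕ} {F : Type*} [Zero F] (v : Fin n → F) : ℕ :=
  Set.ncard { i : Fin n | v i ≠ 0 }

/-- Minimum Mannheim distance of a linear code (minimum Mannheim weight of a
nonzero codeword). -/
def dPiCode (pi : GaussianInt) {n : ℕ} (C : Submodule (GQuot pi) (Fin n → GQuot pi)) : ℕ :=
  sInf { w : ℕ | ∃ c ∈ C, c ≠ 0 ∧ mWtVec pi c = w }

/-- Minimum Hamming distance of a linear code. -/
def dHCode (pi : GaussianInt) {n : ℕ} (C : Submodule (GQuot pi) (Fin n → GQuot pi)) : ℕ :=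
  sInf { w : ℕ | ∃ c ∈ C, c ≠ 0 ∧ hWtVec c = w }

/-- `dPiMax pi n k`: the maximum minimum Mannheim distance over all `[n,k]` codes. -/
def dPiMax (pi : GaussianInt) (n k : ℕ) : ℕ :=
  sSup { d : ℕ | ∃ C : Submodule (GQuot pi) (Fin n → GQuot pi),
    Module.finrank (GQuot pi) C = k ∧ dPiCode pi C = d }

/-- `dHMax pi n k`: the maximum minimum Hamming distance over all `[n,k]` codes. -/
def dHMax (pi : GaussianInt) (n k : ℕ) : ℕ :=
  sSup { d : ℕ | ∃ C : Submodule (GQuot pi) (Fin n → GQuot pi),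
    Module.finrank (GQuot pi) C = k ∧ dHCode pi C = d }

/-!
Multiplication by a nonzero scalar permutes the nonzero elements of the finite field `ℤ[i]/(π)`,
so summing `wt_π(λ·v)` over `λ ≠ 0` contributes the full sum `Σ_{x≠0} wt_π(x)` for each nonzero
coordinate of `v`; this is (i). For (ii), apply (i) to a codeword of minimal Hamming weight: each
of its `p - 1` nonzero multiples is a nonzero codeword, hence has Mannheim weight at least `d_π(C)`.
That `ℤ[i]/(π)` is a field with at least `p` elements comes from `N(π) = p` being prime: `π` is
irreducible, and `p = π·π̄` gives the quotient characteristic `p`.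
-/

namespace Zsqrtd

variable {d : ℤ}

instance isLocalHom_normMonoidHom : IsLocalHom (normMonoidHom (d := d)) :=
  ⟨fun _ hx => norm_eq_one_iff.mp (Int.isUnit_iff_natAbs_eq.mp hx)⟩

theorem irreducible_of_prime_natAbs_norm {x : ℤ√d} (hx : x.norm.natAbs.Prime) :
    Irreducible x :=
  Irreducible.of_map (f := normMonoidHom) (Int.prime_iff_natAbs_prime.mpr hx).irreducible

theorem norm_mem_span_singleton (x : ℤ√d) : (x.norm : ℤ√d) ∈ Ideal.span {x} :=
  norm_eq_mul_conj x ▸ Ideal.mul_mem_right _ _ (Ideal.mem_span_singleton_self x)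

theorem finite_of_surjective {R : Type*} [Ring R] {p : ℕ} [NeZero p] [CharP R p]
    {f : ℤ√d →+* R} (hf : Function.Surjective f) : Finite R := by
  refine Finite.of_surjective
    (fun xy : ZMod p × ZMod p => (xy.1.cast : R) + f sqrtd * xy.2.cast) fun r => ?_
  obtain ⟨⟨x, y⟩, rfl⟩ := hf r
  exact ⟨(x, y), by simp [decompose (x := x)]⟩

end Zsqrtd

open Finset

theorem finsum_mem_ne_zero_eq_sum_erase {α M : Type*} [Zero α] [Fintype α] [DecidableEq α]
    [AddCommMonoid M] (f : α → M) : ∑ᶠ x ∈ {x : α | x ≠ 0}, f x = ∑ x ∈ univ.erase 0, f x := by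
  rw [finsum_mem_eq_toFinset_sum, Set.toFinset_ofPred, filter_ne']

theorem hWtVec_eq_card {n : ℕ} {F : Type*} [Zero F] (v : Fin n → F) :
    hWtVec v = #{i | v i ≠ 0} := by
  rw [hWtVec, Set.ncard_eq_toFinset_card', Set.toFinset_ofPred]

section FiniteDomain

variable {F M : Type*} [Ring F] [IsDomain F] [Fintype F] [AddCommMonoid M]

theorem sum_mul_right_eq_sum (w : F → M) {x : F} (hx : x ≠ 0) :
    ∑ l, w (l * x) = ∑ y, w y :=
  Fintype.sum_bijective _ (mul_left_injective₀ hx).bijective_of_finite _ _ fun _ => rfl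

theorem sum_sum_mul_eq_hWtVec_smul (w : F → M) (hw : w 0 = 0) {n : ℕ} (v : Fin n → F) :
    ∑ l, ∑ i, w (l * v i) = hWtVec v • ∑ y, w y := by
  have hcol : ∀ i, ∑ l, w (l * v i) = if v i ≠ 0 then ∑ y, w y else 0 := by
    intro i
    split_ifs with hvi
    · exact sum_mul_right_eq_sum w hvi
    · simp [not_not.mp hvi, hw]
  rw [sum_comm, Fintype.sum_congr _ _ hcol, sum_ite, sum_const, sum_const_zero, add_zero,
    hWtVec_eq_card]

end FiniteDomain

theorem mWt_zero (pi : GaussianInt) : mWt pi 0 = 0 :=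
  Nat.sInf_eq_zero.mpr (Or.inl ⟨0, map_zero _, rfl⟩)

section MannheimCode

variable (pi : GaussianInt) [IsDomain (GQuot pi)] [Fintype (GQuot pi)] {n : ℕ}

theorem finsum_mWtVec_smul (v : Fin n → GQuot pi) :
    ∑ᶠ l ∈ {l : GQuot pi | l ≠ 0}, mWtVec pi (l • v)
      = (∑ᶠ x ∈ {x : GQuot pi | x ≠ 0}, mWt pi x) * hWtVec v := by
  rw [finsum_mem_ne_zero_eq_sum_erase, finsum_mem_ne_zero_eq_sum_erase,
    sum_erase _ (by simp [mWtVec, mWt_zero]), sum_erase _ (mWt_zero pi), mul_comm,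
    ← smul_eq_mul, ← sum_sum_mul_eq_hWtVec_smul _ (mWt_zero pi)]
  rfl

theorem card_sub_one_mul_dPiCode_le (C : Submodule (GQuot pi) (Fin n → GQuot pi))
    (hC : ∃ c ∈ C, c ≠ 0) :
    (Fintype.card (GQuot pi) - 1) * dPiCode pi C
      ≤ (∑ᶠ x ∈ {x : GQuot pi | x ≠ 0}, mWt pi x) * dHCode pi C := by
  obtain ⟨c, hc, hc0, hcd⟩ := Nat.sInf_mem (s := {w | ∃ c ∈ C, c ≠ 0 ∧ hWtVec c = w})
    (by obtain ⟨c, hc, hc0⟩ := hC; exact ⟨_, c, hc, hc0, rfl⟩)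
  have hle (l) (hl : l ∈ univ.erase (0 : GQuot pi)) : dPiCode pi C ≤ mWtVec pi (l • c) :=
    Nat.sInf_le ⟨l • c, C.smul_mem l hc, smul_ne_zero (ne_of_mem_erase hl) hc0, rfl⟩
  calc (Fintype.card (GQuot pi) - 1) * dPiCode pi C
      = #(univ.erase (0 : GQuot pi)) • dPiCode pi C := by
        rw [card_erase_of_mem (mem_univ _), card_univ, smul_eq_mul]
    _ ≤ ∑ l ∈ univ.erase 0, mWtVec pi (l • c) := card_nsmul_le_sum _ _ _ hle
    _ = _ := by
        rw [← finsum_mem_ne_zero_eq_sum_erase, finsum_mWtVec_smul, hcd, dHCode]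

end MannheimCode

theorem stmt7_general (a b : ℕ) (hp : Nat.Prime (a ^ 2 + b ^ 2))
    (pi : GaussianInt) (hpi : pi = (⟨(a : ℤ), (b : ℤ)⟩ : GaussianInt)) (n : ℕ) :
    (∀ v : Fin n → GQuot pi,
      (∑ᶠ l ∈ {l : GQuot pi | l ≠ 0}, mWtVec pi (l • v))
        = (∑ᶠ x ∈ {x : GQuot pi | x ≠ 0}, mWt pi x) * hWtVec v) ∧
    (∀ C : Submodule (GQuot pi) (Fin n → GQuot pi), (∃ c ∈ C, c ≠ 0) →
      (a ^ 2 + b ^ 2 - 1) * dPiCode pi C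
        ≤ (∑ᶠ x ∈ {x : GQuot pi | x ≠ 0}, mWt pi x) * dHCode pi C) := by
  set p := a ^ 2 + b ^ 2
  have : Fact p.Prime := ⟨hp⟩
  have hnorm : pi.norm = p := by
    subst hpi; simp only [Zsqrtd.norm, p]; push_cast; ring
  have : (Ideal.span {pi}).IsMaximal := PrincipalIdealRing.isMaximal_of_irreducible
    (Zsqrtd.irreducible_of_prime_natAbs_norm (by rwa [hnorm, Int.natAbs_natCast]))
  have : CharP (GQuot pi) p := (CharP.charP_iff_prime_eq_zero hp).mpr <| by
    simpa [hnorm] using Ideal.Quotient.eq_zero_iff_mem.mpr (Zsqrtd.norm_mem_span_singleton pi)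
  have : Finite (GQuot pi) := Zsqrtd.finite_of_surjective (p := p) Ideal.Quotient.mk_surjective
  have := Fintype.ofFinite (GQuot pi)
  have hcard : p ≤ Fintype.card (GQuot pi) := by
    simpa using Fintype.card_le_of_injective _ (ZMod.castHom dvd_rfl (GQuot pi)).injective
  refine ⟨finsum_mWtVec_smul pi, fun C hC => ?_⟩
  exact (Nat.mul_le_mul_right _ (by omega)).trans (card_sub_one_mul_dPiCode_le pi C hC)

/-- (i) `Σ_{λ≠0} wt_π(λ·v) = (Σ_{x≠0} wt_π(x)) · wt_H(v)` for every vector `v`,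
and (ii) `(p-1)·d_π(C) ≤ (Σ_{x≠0} wt_π(x)) · d_H(C)` for every linear code `C` with a nonzero
codeword. -/
theorem stmt7 (a b : ℕ) (ha : 0 < a) (hab : a < b) (hgcd : Nat.gcd a b = 1)
    (hp : Nat.Prime (a ^ 2 + b ^ 2)) (hmod : (a ^ 2 + b ^ 2) % 4 = 1)
    (pi : GaussianInt) (hpi : pi = (⟨(a : ℤ), (b : ℤ)⟩ : GaussianInt)) (n : ℕ) :
    (∀ v : Fin n → GQuot pi,
      (∑ᶠ l ∈ {l : GQuot pi | l ≠ 0}, mWtVec pi (l • v))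
        = (∑ᶠ x ∈ {x : GQuot pi | x ≠ 0}, mWt pi x) * hWtVec v) ∧
    (∀ C : Submodule (GQuot pi) (Fin n → GQuot pi), (∃ c ∈ C, c ≠ 0) →
      (a ^ 2 + b ^ 2 - 1) * dPiCode pi C
        ≤ (∑ᶠ x ∈ {x : GQuot pi | x ≠ 0}, mWt pi x) * dHCode pi C) :=
  stmt7_general a b hp pi hpi n
end
end
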